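/- Let N be a natural number and let s, t : Fin N → Option Bool. Define the 2×2 complex matrices Q = E_{01} (the matrix with a 1 in the (0,1) entry) and Q† = E_{10}, and assign to each value: none ↦ the 2×2 identity, some false ↦ Q, some true ↦ Q†. Let G_s be the N-fold Kronecker product, i.e. the matrix indexed by (Fin N → Fin 2) with entries G_s(x, y) = ∏_{i} (factor assigned to s i)(x i, y i), and similarly G_t; set T_s = G_s − G_sᴴ and T_t = G_t − G_tᴴ (ᴴ denotes conjugate transpose). If the supports {i : s i ≠ none} and {i : t i ≠ none} are equal, or if they are disjoint, then T_s and T_t commute: T_s·T_t = T_t·T_s. -/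

import Mathlib

open Matrix

/-- The single-qubit factor assigned to an `Option Bool` label: `none` is the identity,
`some false` is the qubit annihilation operator `Q = E_{01}`, and `some true` is the
qubit creation operator `Q† = E_{10}`. -/
def qubitFactor : Option Bool → Matrix (Fin 2) (Fin 2) ℂ
  | none => 1
  | some false => single 0 1 1
  | some true => single 1 0 1

/-- The `N`-fold Kronecker product of the single-qubit factors determined by
`s : Fin N → Option Bool`. -/
def excitationProd (N : ℕ) (s : Fin N → Option Bool) :
    Matrix (Fin N → Fin 2) (Fin N → Fin 2) ℂ :=
  Matrix.of fun x y => ∏ i, qubitFactor (s i) (x i) (y i)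

/-!
Write `s̄` for `s` with `Q` and `Q†` exchanged, so that `G_sᴴ = G_{s̄}` and `T_s = G_s - G_{s̄}`.
A Kronecker product of matrices is multiplicative factorwise, and `Q² = (Q†)² = 0`. Hence `G_a`
and `G_b` commute when `a` and `b` have disjoint supports (every factor of one of them is the
identity), and `G_a G_b = G_b G_a = 0` when `a` and `b` carry the same operator at some qubit.
With equal supports either `t = s`, or `t = s̄` and `T_t = -T_s`, or `t` agrees with `s` at one
qubit of the support and with `s̄` at another; then each of the four pairs `(s, t)`, `(s, t̄)`,
`(s̄, t)`, `(s̄, t̄)` carries the same operator somewhere.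
-/

section PiKron

variable {ι : Type*} [Fintype ι] {l m n : Type*} {R : Type*} [CommSemiring R]

def piKron (A : ι → Matrix m n R) : Matrix (ι → m) (ι → n) R :=
  Matrix.of fun x y => ∏ i, A i (x i) (y i)

theorem piKron_mul [DecidableEq ι] [Fintype m] (A : ι → Matrix l m R) (B : ι → Matrix m n R) :
    piKron A * piKron B = piKron fun i => A i * B i := by
  ext x y
  simp only [piKron, mul_apply, of_apply, ← Finset.prod_mul_distrib, Fintype.prod_sum]

theorem piKron_conjTranspose [StarRing R] (A : ι → Matrix m n R) :
    (piKron A)ᴴ = piKron fun i => (A i)ᴴ := by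
  ext x y
  simp [piKron, conjTranspose_apply, star_prod]

theorem piKron_eq_zero {A : ι → Matrix m n R} {j : ι} (h : A j = 0) : piKron A = 0 := by
  ext x y
  exact Finset.prod_eq_zero (Finset.mem_univ j) (by simp [h])

theorem commute_piKron [DecidableEq ι] [Fintype n] {A B : ι → Matrix n n R}
    (h : ∀ i, Commute (A i) (B i)) : Commute (piKron A) (piKron B) := by
  rw [Commute, SemiconjBy, piKron_mul, piKron_mul]
  exact congrArg piKron (funext h)

end PiKron

theorem qubitFactor_some_mul_self (b : Bool) :
    qubitFactor (some b) * qubitFactor (some b) = 0 := by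
  cases b <;> simp [qubitFactor]

theorem qubitFactor_conjTranspose (o : Option Bool) :
    (qubitFactor o)ᴴ = qubitFactor (o.map not) := by
  rcases o with _ | _ | _ <;> ext i j <;> fin_cases i <;> fin_cases j <;>
    simp [qubitFactor, conjTranspose_apply, single]

theorem Option.ne_none_and_eq_of_ne_map_not {a b : Option Bool} (hab : a = none ↔ b = none)
    (h : b ≠ a.map not) : a ≠ none ∧ a = b := by
  rcases a with _ | _ | _ <;> rcases b with _ | _ | _ <;> simp_all

section Excitation

variable {N : ℕ}

theorem excitationProd_eq_piKron (s : Fin N → Option Bool) :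
    excitationProd N s = piKron fun i => qubitFactor (s i) :=
  rfl

theorem excitationProd_conjTranspose (s : Fin N → Option Bool) :
    (excitationProd N s)ᴴ = excitationProd N (Option.map not ∘ s) := by
  simp only [excitationProd_eq_piKron, piKron_conjTranspose, qubitFactor_conjTranspose,
    Function.comp_apply]

theorem excitationProd_mul_eq_zero {s t : Fin N → Option Bool} {j : Fin N} (hj : s j ≠ none)
    (hst : s j = t j) : excitationProd N s * excitationProd N t = 0 := by
  obtain ⟨b, hb⟩ := Option.ne_none_iff_exists'.mp hj
  rw [excitationProd_eq_piKron, excitationProd_eq_piKron, piKron_mul]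
  exact piKron_eq_zero (j := j) (by rw [← hst, hb, qubitFactor_some_mul_self])

theorem commute_excitationProd_of_eq_of_ne_none {s t : Fin N → Option Bool} {j : Fin N}
    (hj : s j ≠ none) (hst : s j = t j) : Commute (excitationProd N s) (excitationProd N t) := by
  rw [Commute, SemiconjBy, excitationProd_mul_eq_zero hj hst,
    excitationProd_mul_eq_zero (hst ▸ hj) hst.symm]

theorem commute_excitationProd_of_disjoint {s t : Fin N → Option Bool}
    (h : ∀ i, s i = none ∨ t i = none) : Commute (excitationProd N s) (excitationProd N t) := by
  refine commute_piKron fun i => ?_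
  rcases h i with hi | hi <;> rw [hi]
  exacts [Commute.one_left _, Commute.one_right _]

theorem commute_excitationGenerator_of_disjoint {s t : Fin N → Option Bool}
    (h : ∀ i, s i = none ∨ t i = none) :
    Commute (excitationProd N s - excitationProd N (Option.map not ∘ s))
      (excitationProd N t - excitationProd N (Option.map not ∘ t)) := by
  refine (Commute.sub_right ?_ ?_).sub_left (Commute.sub_right ?_ ?_) <;>
    refine commute_excitationProd_of_disjoint fun i => ?_ <;>
    simpa only [Function.comp_apply, Option.map_eq_none_iff] using h i

theorem commute_excitationGenerator_of_support_eq {s t : Fin N → Option Bool}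
    (h : ∀ i, s i = none ↔ t i = none) :
    Commute (excitationProd N s - excitationProd N (Option.map not ∘ s))
      (excitationProd N t - excitationProd N (Option.map not ∘ t)) := by
  by_cases hts : t = s
  · rw [hts]
  by_cases hts' : t = Option.map not ∘ s
  · have hflip : Option.map not ∘ t = s := by
      funext i
      simp [hts', Bool.involutive_not.comp_self]
    rw [hflip, hts', ← neg_sub]
    exact (Commute.refl _).neg_left
  obtain ⟨k, hk⟩ := Function.ne_iff.mp hts'
  obtain ⟨j, hj⟩ := Function.ne_iff.mp hts
  obtain ⟨hsk, hstk⟩ := Option.ne_none_and_eq_of_ne_map_not (h k) hk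
  obtain ⟨hsj, hstj⟩ := Option.ne_none_and_eq_of_ne_map_not (a := (Option.map not ∘ s) j)
    (by simpa using h j) (by simpa [Bool.involutive_not.comp_self] using hj)
  refine (Commute.sub_right ?_ ?_).sub_left (Commute.sub_right ?_ ?_)
  · exact commute_excitationProd_of_eq_of_ne_none hsk hstk
  · exact commute_excitationProd_of_eq_of_ne_none (j := j) (by simpa using hsj)
      (by simpa [Bool.involutive_not.comp_self] using congrArg (Option.map not) hstj)
  · exact commute_excitationProd_of_eq_of_ne_none hsj hstj
  · exact commute_excitationProd_of_eq_of_ne_none (j := k) (by simpa using hsk)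
      (by simpa using congrArg (Option.map not) hstk)

end Excitation

theorem stmt3 (N : ℕ) (s t : Fin N → Option Bool)
    (h : {i : Fin N | s i ≠ none} = {i : Fin N | t i ≠ none} ∨
      Disjoint {i : Fin N | s i ≠ none} {i : Fin N | t i ≠ none}) :
    Commute (excitationProd N s - (excitationProd N s)ᴴ)
      (excitationProd N t - (excitationProd N t)ᴴ) := by
  rw [excitationProd_conjTranspose, excitationProd_conjTranspose]
  rcases h with h | h
  · refine commute_excitationGenerator_of_support_eq fun i => ?_
    simpa using (Set.ext_iff.mp h i).not
  · refine commute_excitationGenerator_of_disjoint fun i => ?_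
    by_contra! hi
    exact Set.disjoint_left.mp h hi.1 hi.2
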